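/- Let φ, ψ ∈ G₁ and let ρ:(0,∞)→(0,∞) be measurable, satisfying the Dini condition ∫_0^1 ρ(s)/s ds < ∞ and the growth condition: there exist C>0 and 0<2k₁<k₂<∞ with sup_{r/2<s≤r} ρ(s) ≤ C∫_{k₁r}^{k₂r} ρ(s)/s ds for all r>0. Assume there is a constant C₁>0 such that (1/φ(r))·∫_0^r ρ(t)/t dt + ∫_r^∞ ρ(t)/(t·φ(t)) dt ≤ C₁/ψ(r) for all r>0. Then there is a constant C₂>0 such that the generalized fractional integral I_ρ f(x) = ∫_{ℝⁿ} |f(y)|·ρ(|x−y|)/|x−y|^n dy satisfies ‖I_ρ f‖_{M^ψ_1} ≤ C₂·‖f‖_{M^φ_1} for every measurable f, where the norms are the ball-based generalized Morrey norms with q=1. -/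

import Mathlib

/-!
Fix a ball `B(a, r)` and split the kernel at `|x - y| = r`. For the near part, Fubini and polar
coordinates show that every `y ∈ B(a, 2r)` carries kernel mass `n |B(0,1)| ∫₀ʳ ρ(t)/t dt`, and the
Morrey norm bounds `∫_{B(a,2r)} |f|` by `|B(a,r)| 2ⁿ ‖f‖ / φ(r)`. For the far part, the growth
condition dominates `ρ(d)/dⁿ` by `C ∫_{k₁d}^{k₂d} (k₂/t)ⁿ ρ(t)/t dt`; exchanging the integrals
leaves `∫_{k₁r}^∞ (k₂/t)ⁿ ρ(t)/t ∫_{B(x,t/k₁)} |f| dt ≲ ‖f‖ ∫_{k₁r}^∞ ρ(t)/(t φ(t/k₁)) dt`, and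
`φ(t) ≤ max(1, k₁ⁿ) φ(t/k₁)` (from `φ ∈ G₁`) brings this back to the quantity in the Spanne
condition. Both parts are therefore `≲ ‖f‖ C₁ / ψ(r)`. In dimension `0` every function of `G₁` is
constant and `I_ρ f = ρ(0) f`.
-/

open MeasureTheory Set
open scoped ENNReal NNReal

/-- The ball-based generalized Morrey norm of an `ℝ≥0∞`-valued function on
Euclidean space. -/
noncomputable def ballMorreyNormE (n : ℕ) (q : ℝ) (φ : ℝ → ℝ)
    (F : EuclideanSpace ℝ (Fin n) → ℝ≥0∞) : ℝ≥0∞ :=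
  ⨆ (a : EuclideanSpace ℝ (Fin n)) (r : ℝ) (_ : 0 < r),
    ENNReal.ofReal (φ r) *
      ((volume (Metric.ball a r))⁻¹ *
        ∫⁻ x in Metric.ball a r, (F x) ^ q) ^ (1 / q)

/-- The class `G_q`: nondecreasing functions `φ : (0,∞) → (0,∞)` such that
`t ↦ t^{-n/q} φ(t)` is nonincreasing on `(0,∞)`. -/
def IsGq (n : ℕ) (q : ℝ) (φ : ℝ → ℝ) : Prop :=
  (∀ t, 0 < t → 0 < φ t) ∧
  (∀ s t, 0 < s → s ≤ t → φ s ≤ φ t) ∧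
  (∀ s t, 0 < s → s ≤ t → t ^ (-((n : ℝ) / q)) * φ t ≤ s ^ (-((n : ℝ) / q)) * φ s)

/-- The generalized fractional integral operator
`I_ρ F(x) = ∫ F(y) ρ(|x-y|)/|x-y|^n dy` (applied to `ℝ≥0∞`-valued data). -/
noncomputable def fracIntegral (n : ℕ) (ρ : ℝ → ℝ)
    (F : EuclideanSpace ℝ (Fin n) → ℝ≥0∞)
    (x : EuclideanSpace ℝ (Fin n)) : ℝ≥0∞ :=
  ∫⁻ y, F y * ENNReal.ofReal (ρ (dist x y) / dist x y ^ n)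

open Module Metric

section Polar

variable {E : Type*} [NormedAddCommGroup E] [NormedSpace ℝ E] [MeasurableSpace E] [BorelSpace E]
  [FiniteDimensional ℝ E] [Nontrivial E] (μ : Measure E) [μ.IsAddHaarMeasure]

theorem lintegral_fun_norm_addHaar {g : ℝ → ℝ≥0∞} (hg : Measurable g) :
    ∫⁻ x, g ‖x‖ ∂μ = finrank ℝ E * μ (ball 0 1) *
      ∫⁻ t in Ioi (0 : ℝ), ENNReal.ofReal (t ^ (finrank ℝ E - 1)) * g t := by
  have hg_snd : Measurable fun p : sphere (0 : E) 1 × Ioi (0 : ℝ) => g p.2 :=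
    hg.comp (measurable_subtype_coe.comp measurable_snd)
  calc ∫⁻ x, g ‖x‖ ∂μ = ∫⁻ x : ({(0 : E)}ᶜ : Set E), g ‖x.1‖ ∂(μ.comap (↑)) := by
        rw [lintegral_subtype_comap (measurableSet_singleton _).compl fun x => g ‖x‖,
          restrict_compl_singleton]
    _ = ∫⁻ p : sphere (0 : E) 1 × Ioi (0 : ℝ), g p.2
          ∂(μ.toSphere.prod (.volumeIoiPow (finrank ℝ E - 1))) := by
        simpa using μ.measurePreserving_homeomorphUnitSphereProd.lintegral_comp hg_snd
    _ = μ.toSphere univ * ∫⁻ t : Ioi (0 : ℝ), g t ∂(.volumeIoiPow (finrank ℝ E - 1)) := by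
        rw [lintegral_prod _ hg_snd.aemeasurable]
        simp [lintegral_const, mul_comm]
    _ = _ := by
        rw [Measure.toSphere_apply_univ, Measure.volumeIoiPow,
          lintegral_withDensity_eq_lintegral_mul _
            (measurable_subtype_coe.pow_const _).ennreal_ofReal
            (show Measurable fun t : Ioi (0 : ℝ) => g t from hg.comp measurable_subtype_coe)]
        exact congrArg _ (lintegral_subtype_comap measurableSet_Ioi
          fun t => ENNReal.ofReal (t ^ (finrank ℝ E - 1)) * g t)

theorem setLIntegral_ball_ofReal_div_dist_pow {ρ : ℝ → ℝ} (hρ : Measurable ρ) (y : E) (R : ℝ) :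
    ∫⁻ x in ball y R, ENNReal.ofReal (ρ (dist x y) / dist x y ^ finrank ℝ E) ∂μ =
      finrank ℝ E * μ (ball 0 1) * ∫⁻ t in Ioc 0 R, ENNReal.ofReal (ρ t / t) := by
  set g : ℝ → ℝ≥0∞ := fun t => ENNReal.ofReal (ρ t / t ^ finrank ℝ E)
  have hg : Measurable g := (hρ.div (measurable_id.pow_const _)).ennreal_ofReal
  calc ∫⁻ x in ball y R, g (dist x y) ∂μ
      = ∫⁻ x, (ball y R).indicator (fun x => g (dist x y)) (x + y) ∂μ := by
        rw [lintegral_add_right_eq_self, lintegral_indicator measurableSet_ball]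
    _ = ∫⁻ x, (Iio R).indicator g ‖x‖ ∂μ := by
        congr with x
        simp [indicator, dist_eq_norm]
    _ = finrank ℝ E * μ (ball 0 1) *
          ∫⁻ t in Ioi 0, (Iio R).indicator (fun t => ENNReal.ofReal (ρ t / t)) t := by
        rw [lintegral_fun_norm_addHaar μ (hg.indicator measurableSet_Iio)]
        congr 1
        refine setLIntegral_congr_fun measurableSet_Ioi fun t (ht : 0 < t) => ?_
        by_cases htR : t ∈ Iio R
        · have hpow : t ^ finrank ℝ E = t ^ (finrank ℝ E - 1) * t := by
            rw [← pow_succ, Nat.sub_add_cancel finrank_pos]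
          rw [indicator_of_mem htR, indicator_of_mem htR, ← ENNReal.ofReal_mul (by positivity),
            hpow]
          field_simp
        · simp [indicator_of_notMem htR]
    _ = _ := by
        rw [lintegral_indicator measurableSet_Iio, Measure.restrict_restrict measurableSet_Iio,
          Iio_inter_Ioi, setLIntegral_congr Ioo_ae_eq_Ioc]

end Polar

namespace IsGq

variable {n : ℕ} {φ : ℝ → ℝ}

theorem pow_mul_le (hφ : IsGq n 1 φ) {s t : ℝ} (hs : 0 < s) (hst : s ≤ t) :
    s ^ n * φ t ≤ t ^ n * φ s := by
  have ht : 0 < t := hs.trans_le hst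
  have h := hφ.2.2 s t hs hst
  rw [div_one, Real.rpow_neg ht.le, Real.rpow_neg hs.le, Real.rpow_natCast, Real.rpow_natCast,
    ← div_eq_inv_mul, ← div_eq_inv_mul, div_le_div_iff₀ (pow_pos ht n) (pow_pos hs n)] at h
  linarith

theorem le_max_one_pow_mul_div (hφ : IsGq n 1 φ) {k t : ℝ} (hk : 0 < k) (ht : 0 < t) :
    φ t ≤ max 1 (k ^ n) * φ (t / k) := by
  have hφtk : 0 < φ (t / k) := hφ.1 _ (div_pos ht hk)
  rcases le_total k 1 with hk1 | hk1
  · calc φ t ≤ φ (t / k) := hφ.2.1 t (t / k) ht (le_div_self ht.le hk hk1)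
      _ ≤ max 1 (k ^ n) * φ (t / k) := le_mul_of_one_le_left hφtk.le (le_max_left _ _)
  · have h := hφ.pow_mul_le (div_pos ht hk) (div_le_self ht.le hk1)
    rw [div_pow, div_mul_eq_mul_div, div_le_iff₀ (pow_pos hk n)] at h
    calc φ t ≤ k ^ n * φ (t / k) := le_of_mul_le_mul_left (by linarith) (pow_pos ht n)
      _ ≤ max 1 (k ^ n) * φ (t / k) := by gcongr; exact le_max_right _ _

theorem ofReal_inv_le_max_one_pow_mul_inv (hφ : IsGq n 1 φ) {k t : ℝ} (hk : 0 < k) (ht : 0 < t) :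
    (ENNReal.ofReal (φ (t / k)))⁻¹ ≤ ENNReal.ofReal (max 1 (k ^ n)) * (ENNReal.ofReal (φ t))⁻¹ := by
  have hφt : 0 < φ t := hφ.1 t ht
  have hφtk : 0 < φ (t / k) := hφ.1 _ (div_pos ht hk)
  rw [← ENNReal.ofReal_inv_of_pos hφt, ← ENNReal.ofReal_inv_of_pos hφtk,
    ← ENNReal.ofReal_mul (zero_le_one.trans (le_max_left _ _))]
  refine ENNReal.ofReal_le_ofReal ?_
  rw [← div_eq_mul_inv, le_div_iff₀ hφt, inv_mul_le_iff₀ hφtk]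
  linarith [hφ.le_max_one_pow_mul_div hk ht]

theorem eq_of_dim_zero (hφ : IsGq 0 1 φ) {t : ℝ} (ht : 0 < t) : φ t = φ 1 := by
  have hanti : ∀ s t, 0 < s → s ≤ t → φ t ≤ φ s := fun s t hs hst => by
    simpa using hφ.pow_mul_le hs hst
  rcases le_total t 1 with h | h
  · exact le_antisymm (hφ.2.1 t 1 ht h) (hanti t 1 ht h)
  · exact le_antisymm (hanti 1 t one_pos h) (hφ.2.1 1 t one_pos h)

end IsGq

noncomputable def spanneIntegral (φ ρ : ℝ → ℝ) (r : ℝ) : ℝ≥0∞ :=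
  ENNReal.ofReal (1 / φ r) * (∫⁻ t in Ioc 0 r, ENNReal.ofReal (ρ t / t)) +
    ∫⁻ t in Ioi r, ENNReal.ofReal (ρ t / (t * φ t))

section SpanneIntegral

variable {n : ℕ} {φ : ℝ → ℝ} (ρ : ℝ → ℝ)

theorem inv_mul_lintegral_Ioc_le_spanneIntegral {r : ℝ} (hφr : 0 < φ r) :
    (ENNReal.ofReal (φ r))⁻¹ * ∫⁻ t in Ioc 0 r, ENNReal.ofReal (ρ t / t) ≤
      spanneIntegral φ ρ r := by
  rw [spanneIntegral, one_div, ENNReal.ofReal_inv_of_pos hφr]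
  exact le_self_add

theorem IsGq.lintegral_Ioi_le_spanneIntegral (hφ : IsGq n 1 φ) {k r : ℝ} (hk : 0 < k)
    (hr : 0 < r) :
    ∫⁻ t in Ioi (k * r), ENNReal.ofReal (ρ t / t) * (ENNReal.ofReal (φ (t / k)))⁻¹ ≤
      ENNReal.ofReal (max 1 (k ^ n)) * spanneIntegral φ ρ r := by
  set c := ENNReal.ofReal (max 1 (k ^ n))
  have hφr : 0 < φ r := hφ.1 r hr
  have hnear : ∫⁻ t in Ioc (k * r) r, ENNReal.ofReal (ρ t / t) * (ENNReal.ofReal (φ (t / k)))⁻¹ ≤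
      (ENNReal.ofReal (φ r))⁻¹ * ∫⁻ t in Ioc 0 r, ENNReal.ofReal (ρ t / t) := by
    calc _ ≤ ∫⁻ t in Ioc (k * r) r, ENNReal.ofReal (ρ t / t) * (ENNReal.ofReal (φ r))⁻¹ := by
          refine setLIntegral_mono' measurableSet_Ioc fun t ht => ?_
          have hrt : r ≤ t / k := (le_div_iff₀ hk).2 (by linarith [ht.1])
          gcongr
          exact hφ.2.1 r (t / k) hr hrt
      _ ≤ ∫⁻ t in Ioc 0 r, ENNReal.ofReal (ρ t / t) * (ENNReal.ofReal (φ r))⁻¹ :=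
          lintegral_mono_set (Ioc_subset_Ioc_left (by positivity))
      _ = _ := by
          rw [lintegral_mul_const' _ _ (ENNReal.inv_ne_top.2 (ENNReal.ofReal_pos.2 hφr).ne'),
            mul_comm]
  have hfar : ∫⁻ t in Ioi r, ENNReal.ofReal (ρ t / t) * (ENNReal.ofReal (φ (t / k)))⁻¹ ≤
      c * ∫⁻ t in Ioi r, ENNReal.ofReal (ρ t / (t * φ t)) := by
    rw [← lintegral_const_mul' _ _ ENNReal.ofReal_ne_top]
    refine setLIntegral_mono' measurableSet_Ioi fun t (ht : r < t) => ?_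
    have ht0 : 0 < t := hr.trans ht
    calc ENNReal.ofReal (ρ t / t) * (ENNReal.ofReal (φ (t / k)))⁻¹
        ≤ ENNReal.ofReal (ρ t / t) * (c * (ENNReal.ofReal (φ t))⁻¹) := by
          gcongr
          exact hφ.ofReal_inv_le_max_one_pow_mul_inv hk ht0
      _ = c * ENNReal.ofReal (ρ t / (t * φ t)) := by
          rw [← div_div, ENNReal.ofReal_div_of_pos (hφ.1 t ht0), ENNReal.div_eq_inv_mul]
          ring
  calc _ ≤ (∫⁻ t in Ioc (k * r) r, ENNReal.ofReal (ρ t / t) * (ENNReal.ofReal (φ (t / k)))⁻¹) +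
        ∫⁻ t in Ioi r, ENNReal.ofReal (ρ t / t) * (ENNReal.ofReal (φ (t / k)))⁻¹ :=
        (lintegral_mono_set (fun t (ht : k * r < t) => (le_or_gt t r).imp (⟨ht, ·⟩) id)).trans
          (lintegral_union_le _ _ _)
    _ ≤ c * ((ENNReal.ofReal (φ r))⁻¹ * ∫⁻ t in Ioc 0 r, ENNReal.ofReal (ρ t / t)) +
        c * ∫⁻ t in Ioi r, ENNReal.ofReal (ρ t / (t * φ t)) :=
        add_le_add (hnear.trans (le_mul_of_one_le_left zero_le (by simp [c]))) hfar
    _ = c * spanneIntegral φ ρ r := by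
        rw [← mul_add, spanneIntegral, one_div, ENNReal.ofReal_inv_of_pos hφr]

end SpanneIntegral

theorem ofReal_div_pow_le_of_growth {ρ : ℝ → ℝ} {C k₁ k₂ d : ℝ} (n : ℕ) (hk₁ : 0 < k₁)
    (hd : 0 < d) (hgrowth : ENNReal.ofReal (ρ d) ≤
      ENNReal.ofReal C * ∫⁻ t in Ioc (k₁ * d) (k₂ * d), ENNReal.ofReal (ρ t / t)) :
    ENNReal.ofReal (ρ d / d ^ n) ≤ ENNReal.ofReal C *
      ∫⁻ t in Ioc (k₁ * d) (k₂ * d), ENNReal.ofReal ((k₂ / t) ^ n) * ENNReal.ofReal (ρ t / t) := by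
  calc ENNReal.ofReal (ρ d / d ^ n) = ENNReal.ofReal (ρ d) * ENNReal.ofReal ((d ^ n)⁻¹) := by
        rw [div_eq_mul_inv, ENNReal.ofReal_mul' (by positivity)]
    _ ≤ ENNReal.ofReal C * ((∫⁻ t in Ioc (k₁ * d) (k₂ * d), ENNReal.ofReal (ρ t / t)) *
          ENNReal.ofReal ((d ^ n)⁻¹)) := by
        rw [← mul_assoc]; gcongr
    _ ≤ _ := by
        rw [← lintegral_mul_const' _ _ ENNReal.ofReal_ne_top]
        gcongr ENNReal.ofReal C * ?_
        refine setLIntegral_mono' measurableSet_Ioc fun t ht => ?_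
        have ht0 : 0 < t := (mul_pos hk₁ hd).trans ht.1
        rw [mul_comm]
        gcongr
        rw [← inv_pow]
        gcongr
        rw [le_div_iff₀ ht0, inv_mul_le_iff₀ hd, mul_comm]
        exact ht.2

section Morrey

variable {n : ℕ} {φ ψ : ℝ → ℝ} {F G : EuclideanSpace ℝ (Fin n) → ℝ≥0∞}

theorem ballMorreyNormE_one_eq (φ : ℝ → ℝ) (F : EuclideanSpace ℝ (Fin n) → ℝ≥0∞) :
    ballMorreyNormE n 1 φ F = ⨆ (a : EuclideanSpace ℝ (Fin n)) (r : ℝ) (_ : 0 < r),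
      ENNReal.ofReal (φ r) * ((volume (ball a r))⁻¹ * ∫⁻ x in ball a r, F x) := by
  simp [ballMorreyNormE]

theorem setLIntegral_ball_le_ballMorreyNormE (x : EuclideanSpace ℝ (Fin n)) {t : ℝ} (ht : 0 < t)
    (hφt : 0 < φ t) :
    ∫⁻ y in ball x t, F y ≤
      volume (ball x t) * (ENNReal.ofReal (φ t))⁻¹ * ballMorreyNormE n 1 φ F := by
  have hV : volume (ball x t) ≠ 0 := (measure_ball_pos volume x ht).ne'
  have hφ : ENNReal.ofReal (φ t) ≠ 0 := (ENNReal.ofReal_pos.2 hφt).ne'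
  have hterm : ENNReal.ofReal (φ t) * ((volume (ball x t))⁻¹ * ∫⁻ y in ball x t, F y) ≤
      ballMorreyNormE n 1 φ F := by
    rw [ballMorreyNormE_one_eq]
    exact le_iSup_of_le x (le_iSup_of_le t (le_iSup_of_le ht le_rfl))
  calc ∫⁻ y in ball x t, F y
      = volume (ball x t) * (ENNReal.ofReal (φ t))⁻¹ *
          (ENNReal.ofReal (φ t) * ((volume (ball x t))⁻¹ * ∫⁻ y in ball x t, F y)) := by
        rw [show ∀ V c I : ℝ≥0∞, V * c⁻¹ * (c * (V⁻¹ * I)) = V * V⁻¹ * (c⁻¹ * c) * I by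
            intros; ring, ENNReal.mul_inv_cancel hV measure_ball_lt_top.ne,
          ENNReal.inv_mul_cancel hφ ENNReal.ofReal_ne_top, one_mul, one_mul]
    _ ≤ _ := by gcongr

theorem ballMorreyNormE_one_le_of_setLIntegral_le {Φ : ℝ → ℝ≥0∞} {D : ℝ≥0∞}
    (hG : ∀ a r, 0 < r → ∫⁻ x in ball a r, G x ≤ volume (ball a r) * Φ r)
    (hΦ : ∀ r, 0 < r → ENNReal.ofReal (ψ r) * Φ r ≤ D) :
    ballMorreyNormE n 1 ψ G ≤ D := by
  rw [ballMorreyNormE_one_eq]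
  refine iSup_le fun a => iSup₂_le fun r hr => ?_
  calc ENNReal.ofReal (ψ r) * ((volume (ball a r))⁻¹ * ∫⁻ x in ball a r, G x)
      ≤ ENNReal.ofReal (ψ r) * ((volume (ball a r))⁻¹ * (volume (ball a r) * Φ r)) := by
        gcongr; exact hG a r hr
    _ = ENNReal.ofReal (ψ r) * Φ r := by
        rw [← mul_assoc (volume (ball a r))⁻¹,
          ENNReal.inv_mul_cancel (measure_ball_pos volume a hr).ne' measure_ball_lt_top.ne, one_mul]
    _ ≤ D := hΦ r hr

theorem ballMorreyNormE_le_ofReal_mul {q c : ℝ} (hc : 0 ≤ c) (hψ : ∀ r, 0 < r → ψ r ≤ c * φ r)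
    (F : EuclideanSpace ℝ (Fin n) → ℝ≥0∞) :
    ballMorreyNormE n q ψ F ≤ ENNReal.ofReal c * ballMorreyNormE n q φ F := by
  simp only [ballMorreyNormE, ENNReal.mul_iSup]
  refine iSup_mono fun a => iSup₂_mono fun r hr => ?_
  rw [← mul_assoc, ← ENNReal.ofReal_mul hc]
  gcongr
  exact hψ r hr

theorem ballMorreyNormE_one_const_mul {c : ℝ≥0∞} (hc : c ≠ ⊤) (φ : ℝ → ℝ)
    (F : EuclideanSpace ℝ (Fin n) → ℝ≥0∞) :
    ballMorreyNormE n 1 φ (fun x => c * F x) = c * ballMorreyNormE n 1 φ F := by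
  simp only [ballMorreyNormE_one_eq, ENNReal.mul_iSup, lintegral_const_mul' _ _ hc]
  congr! 5
  ring

end Morrey

theorem fracIntegral_dim_zero (ρ : ℝ → ℝ) (F : EuclideanSpace ℝ (Fin 0) → ℝ≥0∞) :
    fracIntegral 0 ρ F = fun x => ENNReal.ofReal (ρ 0) * F x := by
  ext x
  rw [fracIntegral, volume_euclideanSpace_eq_dirac, lintegral_dirac, Subsingleton.elim x 0]
  simp [mul_comm]

theorem ballMorreyNormE_fracIntegral_le_of_dim_zero {φ ψ : ℝ → ℝ} (hφ : IsGq 0 1 φ)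
    (hψ : IsGq 0 1 ψ) (ρ : ℝ → ℝ) (F : EuclideanSpace ℝ (Fin 0) → ℝ≥0∞) :
    ballMorreyNormE 0 1 ψ (fracIntegral 0 ρ F) ≤
      ENNReal.ofReal (ρ 0) * ENNReal.ofReal (ψ 1 / φ 1) * ballMorreyNormE 0 1 φ F := by
  have hφ1 : 0 < φ 1 := hφ.1 1 one_pos
  rw [fracIntegral_dim_zero, ballMorreyNormE_one_const_mul ENNReal.ofReal_ne_top, mul_assoc]
  gcongr
  refine ballMorreyNormE_le_ofReal_mul (div_nonneg (hψ.1 1 one_pos).le hφ1.le) (fun r hr => ?_) F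
  rw [hψ.eq_of_dim_zero hr, hφ.eq_of_dim_zero hr, div_mul_cancel₀ _ hφ1.ne']

section FractionalIntegral

variable {n : ℕ} {φ ρ : ℝ → ℝ} {F : EuclideanSpace ℝ (Fin n) → ℝ≥0∞}

theorem setLIntegral_ball_lintegral_ball_le (hn : 0 < n) (hρ : Measurable ρ) (hF : Measurable F)
    (a : EuclideanSpace ℝ (Fin n)) (r : ℝ) :
    ∫⁻ x in ball a r, ∫⁻ y in ball x r, F y * ENNReal.ofReal (ρ (dist x y) / dist x y ^ n) ≤
      (∫⁻ y in ball a (2 * r), F y) * (n * volume (ball (0 : EuclideanSpace ℝ (Fin n)) 1) *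
        ∫⁻ t in Ioc 0 r, ENNReal.ofReal (ρ t / t)) := by
  have : Nonempty (Fin n) := ⟨⟨0, hn⟩⟩
  set K : EuclideanSpace ℝ (Fin n) → EuclideanSpace ℝ (Fin n) → ℝ≥0∞ :=
    fun x y => ENNReal.ofReal (ρ (dist x y) / dist x y ^ n)
  have hK : Measurable (Function.uncurry K) :=
    ((hρ.comp measurable_dist).div (measurable_dist.pow_const n)).ennreal_ofReal
  have hFa : Measurable ((ball a (2 * r)).indicator F) := hF.indicator measurableSet_ball
  have hmass : ∀ y, ∫⁻ x in ball y r, K x y = n * volume (ball (0 : EuclideanSpace ℝ (Fin n)) 1) *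
      ∫⁻ t in Ioc 0 r, ENNReal.ofReal (ρ t / t) := fun y => by
    have := setLIntegral_ball_ofReal_div_dist_pow
      (volume : Measure (EuclideanSpace ℝ (Fin n))) hρ y r
    rwa [finrank_euclideanSpace_fin] at this
  calc ∫⁻ x in ball a r, ∫⁻ y in ball x r, F y * K x y
      ≤ ∫⁻ x, ∫⁻ y, (ball a (2 * r)).indicator F y * (ball y r).indicator (K · y) x := by
        refine (setLIntegral_mono' measurableSet_ball fun x hx => ?_).trans
          (setLIntegral_le_lintegral _ _)
        rw [← lintegral_indicator measurableSet_ball]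
        refine lintegral_mono fun y => ?_
        by_cases hy : y ∈ ball x r
        · have hya : y ∈ ball a (2 * r) := by
            rw [mem_ball] at hx hy ⊢
            linarith [dist_triangle y x a, dist_comm x y]
          rw [indicator_of_mem hy, indicator_of_mem hya, indicator_of_mem (mem_ball_comm.1 hy)]
        · rw [indicator_of_notMem hy]
          exact zero_le
    _ = ∫⁻ y, (ball a (2 * r)).indicator F y * ∫⁻ x in ball y r, K x y := by
        have hswap : Measurable (Function.uncurry fun x y =>
            (ball a (2 * r)).indicator F y * (ball y r).indicator (K · y) x) :=
          (hFa.comp measurable_snd).mul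
            (hK.indicator (measurableSet_lt measurable_dist measurable_const))
        rw [lintegral_lintegral_swap hswap.aemeasurable]
        refine lintegral_congr fun y => ?_
        rw [lintegral_const_mul _ (hK.of_uncurry_right.indicator measurableSet_ball),
          lintegral_indicator measurableSet_ball]
    _ = _ := by
        simp_rw [hmass]
        rw [lintegral_mul_const _ hFa, lintegral_indicator measurableSet_ball]

theorem lintegral_compl_ball_le_lintegral_Ioi {C k₁ k₂ : ℝ} (hk₁ : 0 < k₁) (hρ : Measurable ρ)
    (hF : Measurable F) (hgrowth : ∀ d, 0 < d → ENNReal.ofReal (ρ d) ≤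
      ENNReal.ofReal C * ∫⁻ t in Ioc (k₁ * d) (k₂ * d), ENNReal.ofReal (ρ t / t))
    (x : EuclideanSpace ℝ (Fin n)) {r : ℝ} (hr : 0 < r) :
    ∫⁻ y in (ball x r)ᶜ, F y * ENNReal.ofReal (ρ (dist x y) / dist x y ^ n) ≤
      ENNReal.ofReal C * ∫⁻ t in Ioi (k₁ * r),
        (∫⁻ y in ball x (t / k₁), F y) *
          (ENNReal.ofReal ((k₂ / t) ^ n) * ENNReal.ofReal (ρ t / t)) := by
  set w : ℝ → ℝ≥0∞ := fun t => ENNReal.ofReal ((k₂ / t) ^ n) * ENNReal.ofReal (ρ t / t)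
  have hw : Measurable w :=
    ((measurable_const.div measurable_id).pow_const n).ennreal_ofReal.mul
      (hρ.div measurable_id).ennreal_ofReal
  have hpt : ∀ y ∈ (ball x r)ᶜ, F y * ENNReal.ofReal (ρ (dist x y) / dist x y ^ n) ≤
      ENNReal.ofReal C * ∫⁻ t in Ioi (k₁ * r), (ball x (t / k₁)).indicator F y * w t := by
    intro y hy
    have hd : r ≤ dist x y := by simpa [dist_comm] using hy
    have hd0 : 0 < dist x y := hr.trans_le hd
    calc F y * ENNReal.ofReal (ρ (dist x y) / dist x y ^ n)
        ≤ F y * (ENNReal.ofReal C * ∫⁻ t in Ioc (k₁ * dist x y) (k₂ * dist x y), w t) := by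
          gcongr
          exact ofReal_div_pow_le_of_growth n hk₁ hd0 (hgrowth _ hd0)
      _ = ENNReal.ofReal C *
            ∫⁻ t in Ioc (k₁ * dist x y) (k₂ * dist x y), (ball x (t / k₁)).indicator F y * w t := by
          rw [mul_left_comm, ← lintegral_const_mul _ hw]
          congr 1
          refine setLIntegral_congr_fun measurableSet_Ioc fun t ht => ?_
          have hy : y ∈ ball x (t / k₁) := by
            rw [mem_ball, dist_comm, lt_div_iff₀ hk₁, mul_comm]
            exact ht.1
          rw [indicator_of_mem hy]
      _ ≤ _ := by
          gcongr
          exact fun t ht => lt_of_le_of_lt (by gcongr) ht.1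
  have hswap : Measurable (Function.uncurry fun y t => (ball x (t / k₁)).indicator F y * w t) :=
    ((hF.comp measurable_fst).indicator (measurableSet_lt (measurable_fst.dist measurable_const)
      (measurable_snd.div_const k₁))).mul (hw.comp measurable_snd)
  calc _ ≤ ∫⁻ y in (ball x r)ᶜ, ENNReal.ofReal C *
          ∫⁻ t in Ioi (k₁ * r), (ball x (t / k₁)).indicator F y * w t :=
        setLIntegral_mono' measurableSet_ball.compl hpt
    _ ≤ ∫⁻ y, ENNReal.ofReal C * ∫⁻ t in Ioi (k₁ * r), (ball x (t / k₁)).indicator F y * w t :=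
        setLIntegral_le_lintegral _ _
    _ = ENNReal.ofReal C * ∫⁻ t in Ioi (k₁ * r), (∫⁻ y in ball x (t / k₁), F y) * w t := by
        rw [lintegral_const_mul' _ _ ENNReal.ofReal_ne_top,
          lintegral_lintegral_swap hswap.aemeasurable]
        congr 1
        refine lintegral_congr fun t => ?_
        rw [lintegral_mul_const _ (hF.indicator measurableSet_ball),
          lintegral_indicator measurableSet_ball]

theorem setLIntegral_ball_lintegral_ball_le_spanneIntegral (hn : 0 < n) (hφ : IsGq n 1 φ)
    (hρ : Measurable ρ) (hF : Measurable F) (a : EuclideanSpace ℝ (Fin n)) {r : ℝ} (hr : 0 < r) :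
    ∫⁻ x in ball a r, ∫⁻ y in ball x r, F y * ENNReal.ofReal (ρ (dist x y) / dist x y ^ n) ≤
      volume (ball a r) * (ENNReal.ofReal (2 ^ n) * n *
        volume (ball (0 : EuclideanSpace ℝ (Fin n)) 1) * ballMorreyNormE n 1 φ F *
          spanneIntegral φ ρ r) := by
  set M := ballMorreyNormE n 1 φ F
  set v₁ := volume (ball (0 : EuclideanSpace ℝ (Fin n)) 1)
  set S₀ := ∫⁻ t in Ioc 0 r, ENNReal.ofReal (ρ t / t)
  have h2r : (0 : ℝ) < 2 * r := by positivity
  have hvol : volume (ball a (2 * r)) = ENNReal.ofReal (2 ^ n) * volume (ball a r) := by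
    simp only [Measure.addHaar_ball_of_pos _ _ h2r, Measure.addHaar_ball_of_pos _ _ hr,
      finrank_euclideanSpace_fin, mul_pow, ENNReal.ofReal_mul (by positivity : (0 : ℝ) ≤ 2 ^ n),
      mul_assoc]
  calc _ ≤ (∫⁻ y in ball a (2 * r), F y) * (n * v₁ * S₀) :=
        setLIntegral_ball_lintegral_ball_le hn hρ hF a r
    _ ≤ (volume (ball a (2 * r)) * (ENNReal.ofReal (φ (2 * r)))⁻¹ * M) * (n * v₁ * S₀) := by
        gcongr
        exact setLIntegral_ball_le_ballMorreyNormE a h2r (hφ.1 _ h2r)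
    _ ≤ (volume (ball a (2 * r)) * (ENNReal.ofReal (φ r))⁻¹ * M) * (n * v₁ * S₀) := by
        gcongr
        exact hφ.2.1 r (2 * r) hr (by linarith)
    _ = volume (ball a r) * (ENNReal.ofReal (2 ^ n) * n * v₁ * M *
          ((ENNReal.ofReal (φ r))⁻¹ * S₀)) := by
        rw [hvol]; ring
    _ ≤ _ := by
        gcongr
        exact inv_mul_lintegral_Ioc_le_spanneIntegral ρ (hφ.1 r hr)

theorem lintegral_compl_ball_le_spanneIntegral (hφ : IsGq n 1 φ) {C k₁ k₂ : ℝ} (hk₁ : 0 < k₁)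
    (hρ : Measurable ρ) (hF : Measurable F) (hgrowth : ∀ d, 0 < d → ENNReal.ofReal (ρ d) ≤
      ENNReal.ofReal C * ∫⁻ t in Ioc (k₁ * d) (k₂ * d), ENNReal.ofReal (ρ t / t))
    (hM : ballMorreyNormE n 1 φ F ≠ ⊤) (x : EuclideanSpace ℝ (Fin n)) {r : ℝ} (hr : 0 < r) :
    ∫⁻ y in (ball x r)ᶜ, F y * ENNReal.ofReal (ρ (dist x y) / dist x y ^ n) ≤
      ENNReal.ofReal C * ENNReal.ofReal ((k₂ / k₁) ^ n) * ENNReal.ofReal (max 1 (k₁ ^ n)) *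
        volume (ball (0 : EuclideanSpace ℝ (Fin n)) 1) * ballMorreyNormE n 1 φ F *
          spanneIntegral φ ρ r := by
  set M := ballMorreyNormE n 1 φ F
  set v₁ := volume (ball (0 : EuclideanSpace ℝ (Fin n)) 1)
  set c := ENNReal.ofReal ((k₂ / k₁) ^ n) * v₁ * M with hc_def
  have hc : c ≠ ⊤ := by finiteness
  calc _ ≤ ENNReal.ofReal C * ∫⁻ t in Ioi (k₁ * r), (∫⁻ y in ball x (t / k₁), F y) *
          (ENNReal.ofReal ((k₂ / t) ^ n) * ENNReal.ofReal (ρ t / t)) :=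
        lintegral_compl_ball_le_lintegral_Ioi hk₁ hρ hF hgrowth x hr
    _ ≤ ENNReal.ofReal C * ∫⁻ t in Ioi (k₁ * r),
          c * (ENNReal.ofReal (ρ t / t) * (ENNReal.ofReal (φ (t / k₁)))⁻¹) := by
        gcongr ENNReal.ofReal C * ?_
        refine setLIntegral_mono' measurableSet_Ioi fun t (ht : k₁ * r < t) => ?_
        have ht0 : 0 < t := (mul_pos hk₁ hr).trans ht
        have htk : 0 < t / k₁ := div_pos ht0 hk₁
        have hpow : (k₂ / k₁) ^ n = (t / k₁) ^ n * (k₂ / t) ^ n := by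
          rw [← mul_pow]; field_simp
        calc (∫⁻ y in ball x (t / k₁), F y) *
              (ENNReal.ofReal ((k₂ / t) ^ n) * ENNReal.ofReal (ρ t / t))
            ≤ (volume (ball x (t / k₁)) * (ENNReal.ofReal (φ (t / k₁)))⁻¹ * M) *
              (ENNReal.ofReal ((k₂ / t) ^ n) * ENNReal.ofReal (ρ t / t)) := by
              gcongr
              exact setLIntegral_ball_le_ballMorreyNormE x htk (hφ.1 _ htk)
          _ = _ := by
              rw [Measure.addHaar_ball_of_pos _ _ htk, finrank_euclideanSpace_fin, hc_def, hpow,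
                ENNReal.ofReal_mul (by positivity)]
              ring
    _ = ENNReal.ofReal C * c *
          ∫⁻ t in Ioi (k₁ * r), ENNReal.ofReal (ρ t / t) * (ENNReal.ofReal (φ (t / k₁)))⁻¹ := by
        rw [lintegral_const_mul' _ _ hc, ← mul_assoc]
    _ ≤ ENNReal.ofReal C * c * (ENNReal.ofReal (max 1 (k₁ ^ n)) * spanneIntegral φ ρ r) := by
        gcongr
        exact hφ.lintegral_Ioi_le_spanneIntegral ρ hk₁ hr
    _ = _ := by rw [hc_def]; ring

theorem setLIntegral_ball_fracIntegral_le (hn : 0 < n) (hφ : IsGq n 1 φ) {C k₁ k₂ : ℝ}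
    (hk₁ : 0 < k₁) (hρ : Measurable ρ) (hF : Measurable F) (hgrowth : ∀ d, 0 < d →
      ENNReal.ofReal (ρ d) ≤
        ENNReal.ofReal C * ∫⁻ t in Ioc (k₁ * d) (k₂ * d), ENNReal.ofReal (ρ t / t))
    (hM : ballMorreyNormE n 1 φ F ≠ ⊤) (a : EuclideanSpace ℝ (Fin n)) {r : ℝ} (hr : 0 < r) :
    ∫⁻ x in ball a r, fracIntegral n ρ F x ≤ volume (ball a r) *
      ((ENNReal.ofReal (2 ^ n) * n +
          ENNReal.ofReal C * ENNReal.ofReal ((k₂ / k₁) ^ n) * ENNReal.ofReal (max 1 (k₁ ^ n))) *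
        volume (ball (0 : EuclideanSpace ℝ (Fin n)) 1) * ballMorreyNormE n 1 φ F *
          spanneIntegral φ ρ r) := by
  set far := ENNReal.ofReal C * ENNReal.ofReal ((k₂ / k₁) ^ n) * ENNReal.ofReal (max 1 (k₁ ^ n)) *
    volume (ball (0 : EuclideanSpace ℝ (Fin n)) 1) * ballMorreyNormE n 1 φ F *
      spanneIntegral φ ρ r with hfar
  calc ∫⁻ x in ball a r, fracIntegral n ρ F x
      = ∫⁻ x in ball a r, (∫⁻ y in ball x r, F y * ENNReal.ofReal (ρ (dist x y) / dist x y ^ n)) +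
          ∫⁻ y in (ball x r)ᶜ, F y * ENNReal.ofReal (ρ (dist x y) / dist x y ^ n) :=
        lintegral_congr fun x => (lintegral_add_compl _ measurableSet_ball).symm
    _ ≤ ∫⁻ x in ball a r,
          (∫⁻ y in ball x r, F y * ENNReal.ofReal (ρ (dist x y) / dist x y ^ n)) + far :=
        lintegral_mono fun x => add_le_add_right
          (lintegral_compl_ball_le_spanneIntegral hφ hk₁ hρ hF hgrowth hM x hr) _
    _ = (∫⁻ x in ball a r, ∫⁻ y in ball x r, F y * ENNReal.ofReal (ρ (dist x y) / dist x y ^ n)) +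
          volume (ball a r) * far := by
        rw [lintegral_add_right _ measurable_const, setLIntegral_const, mul_comm far]
    _ ≤ volume (ball a r) * (ENNReal.ofReal (2 ^ n) * n *
          volume (ball (0 : EuclideanSpace ℝ (Fin n)) 1) * ballMorreyNormE n 1 φ F *
            spanneIntegral φ ρ r) + volume (ball a r) * far := by
        gcongr
        exact setLIntegral_ball_lintegral_ball_le_spanneIntegral hn hφ hρ hF a hr
    _ = _ := by rw [hfar]; ring

theorem exists_ballMorreyNormE_fracIntegral_le (hn : 0 < n) (hφ : IsGq n 1 φ) {ψ : ℝ → ℝ}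
    (hψ : ∀ t, 0 < t → 0 < ψ t) (hρ : Measurable ρ) {C k₁ k₂ : ℝ} (hk₁ : 0 < k₁)
    (hgrowth : ∀ d, 0 < d → ENNReal.ofReal (ρ d) ≤
      ENNReal.ofReal C * ∫⁻ t in Ioc (k₁ * d) (k₂ * d), ENNReal.ofReal (ρ t / t))
    {C₁ : ℝ} (hkey : ∀ r, 0 < r → spanneIntegral φ ρ r ≤ ENNReal.ofReal (C₁ / ψ r)) :
    ∃ A : ℝ≥0∞, A ≠ ⊤ ∧ ∀ F : EuclideanSpace ℝ (Fin n) → ℝ≥0∞, Measurable F →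
      ballMorreyNormE n 1 φ F ≠ ⊤ →
        ballMorreyNormE n 1 ψ (fracIntegral n ρ F) ≤ A * ballMorreyNormE n 1 φ F := by
  set A₀ := (ENNReal.ofReal (2 ^ n) * n +
      ENNReal.ofReal C * ENNReal.ofReal ((k₂ / k₁) ^ n) * ENNReal.ofReal (max 1 (k₁ ^ n))) *
    volume (ball (0 : EuclideanSpace ℝ (Fin n)) 1)
  refine ⟨A₀ * ENNReal.ofReal C₁, by finiteness, fun F hF hM =>
    ballMorreyNormE_one_le_of_setLIntegral_le
      (fun a r hr => setLIntegral_ball_fracIntegral_le hn hφ hk₁ hρ hF hgrowth hM a hr)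
      fun r hr => ?_⟩
  calc ENNReal.ofReal (ψ r) * (A₀ * ballMorreyNormE n 1 φ F * spanneIntegral φ ρ r)
      ≤ ENNReal.ofReal (ψ r) * (A₀ * ballMorreyNormE n 1 φ F * ENNReal.ofReal (C₁ / ψ r)) := by
        gcongr
        exact hkey r hr
    _ = A₀ * ENNReal.ofReal (ψ r * (C₁ / ψ r)) * ballMorreyNormE n 1 φ F := by
        rw [ENNReal.ofReal_mul (hψ r hr).le]
        ring
    _ = _ := by rw [mul_div_cancel₀ _ (hψ r hr).ne']

end FractionalIntegral

theorem fracIntegral_bounded_spanne_general (n : ℕ)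
    (φ ψ : ℝ → ℝ) (hφ : IsGq n 1 φ) (hψ : IsGq n 1 ψ)
    (ρ : ℝ → ℝ) (hρmeas : Measurable ρ)
    (C k₁ k₂ : ℝ) (hk₁ : 0 < k₁)
    (hgrowth : ∀ r : ℝ, 0 < r → ∀ s : ℝ, r / 2 < s → s ≤ r →
      ENNReal.ofReal (ρ s) ≤
        ENNReal.ofReal C *
          ∫⁻ t in Set.Ioc (k₁ * r) (k₂ * r), ENNReal.ofReal (ρ t / t))
    (C₁ : ℝ)
    (hkey : ∀ r : ℝ, 0 < r →
      ENNReal.ofReal (1 / φ r) *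
          (∫⁻ t in Set.Ioc 0 r, ENNReal.ofReal (ρ t / t)) +
        (∫⁻ t in Set.Ioi r, ENNReal.ofReal (ρ t / (t * φ t))) ≤
        ENNReal.ofReal (C₁ / ψ r)) :
    ∃ C₂ : ℝ, 0 < C₂ ∧ ∀ f : EuclideanSpace ℝ (Fin n) → ℂ, Measurable f →
      ballMorreyNormE n 1 ψ (fracIntegral n ρ (fun y => (‖f y‖₊ : ℝ≥0∞))) ≤
        ENNReal.ofReal C₂ *
          ballMorreyNormE n 1 φ (fun y => (‖f y‖₊ : ℝ≥0∞)) := by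
  obtain ⟨A, hA, hbound⟩ : ∃ A : ℝ≥0∞, A ≠ ⊤ ∧ ∀ F : EuclideanSpace ℝ (Fin n) → ℝ≥0∞,
      Measurable F → ballMorreyNormE n 1 φ F ≠ ⊤ →
        ballMorreyNormE n 1 ψ (fracIntegral n ρ F) ≤ A * ballMorreyNormE n 1 φ F := by
    rcases Nat.eq_zero_or_pos n with rfl | hn
    · exact ⟨_, by finiteness, fun F _ _ => ballMorreyNormE_fracIntegral_le_of_dim_zero hφ hψ ρ F⟩
    · exact exists_ballMorreyNormE_fracIntegral_le hn hφ hψ.1 hρmeas hk₁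
        (fun d hd => hgrowth d hd d (half_lt_self hd) le_rfl) hkey
  refine ⟨A.toReal + 1, by positivity, fun f hf => ?_⟩
  have hA' : A ≤ ENNReal.ofReal (A.toReal + 1) :=
    (ENNReal.le_ofReal_iff_toReal_le hA (by positivity)).2 (by linarith)
  rcases eq_or_ne (ballMorreyNormE n 1 φ fun y => (‖f y‖₊ : ℝ≥0∞)) ⊤ with hM | hM
  · rw [hM, ENNReal.mul_top (by positivity)]
    exact le_top
  · exact (hbound _ hf.nnnorm.coe_nnreal_ennreal hM).trans (by gcongr)

/-- Spanne-type theorem: let `φ, ψ ∈ G₁` and let `ρ` be positive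
measurable satisfying the Dini and growth conditions. If
`(1/φ(r)) ∫_0^r ρ(t)/t dt + ∫_r^∞ ρ(t)/(t φ(t)) dt ≤ C₁/ψ(r)` for all `r>0`,
then `I_ρ` is bounded from `M^φ_1(ℝⁿ)` to `M^ψ_1(ℝⁿ)`. -/
theorem fracIntegral_bounded_spanne (n : ℕ)
    (φ ψ : ℝ → ℝ) (hφ : IsGq n 1 φ) (hψ : IsGq n 1 ψ)
    (ρ : ℝ → ℝ) (hρmeas : Measurable ρ) (hρpos : ∀ t, 0 < t → 0 < ρ t)
    (hdini : ∫⁻ s in Set.Ioc (0 : ℝ) 1, ENNReal.ofReal (ρ s / s) < ⊤)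
    (C k₁ k₂ : ℝ) (hC : 0 < C) (hk₁ : 0 < k₁) (hk : 2 * k₁ < k₂)
    (hgrowth : ∀ r : ℝ, 0 < r → ∀ s : ℝ, r / 2 < s → s ≤ r →
      ENNReal.ofReal (ρ s) ≤
        ENNReal.ofReal C *
          ∫⁻ t in Set.Ioc (k₁ * r) (k₂ * r), ENNReal.ofReal (ρ t / t))
    (C₁ : ℝ) (hC₁ : 0 < C₁)
    (hkey : ∀ r : ℝ, 0 < r →
      ENNReal.ofReal (1 / φ r) *
          (∫⁻ t in Set.Ioc 0 r, ENNReal.ofReal (ρ t / t)) +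
        (∫⁻ t in Set.Ioi r, ENNReal.ofReal (ρ t / (t * φ t))) ≤
        ENNReal.ofReal (C₁ / ψ r)) :
    ∃ C₂ : ℝ, 0 < C₂ ∧ ∀ f : EuclideanSpace ℝ (Fin n) → ℂ, Measurable f →
      ballMorreyNormE n 1 ψ (fracIntegral n ρ (fun y => (‖f y‖₊ : ℝ≥0∞))) ≤
        ENNReal.ofReal C₂ *
          ballMorreyNormE n 1 φ (fun y => (‖f y‖₊ : ℝ≥0∞)) :=
  fracIntegral_bounded_spanne_general n φ ψ hφ hψ ρ hρmeas C k₁ k₂ hk₁ hgrowth C₁ hkey
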